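/- arXiv:2106.13181 — 5 statements merged into one kernel-verified Lean document; each statement's English description precedes it below -/
import Mathlib

section
/- Let X, Y ⊆ ℝ^d be convex compact subsets of the unit ball with X − Y ⊆ B(0,1), and let c(x,y) = h(x−y) where h : ℝ^d → [0,1] is convex, even, and has ‖h‖_{C²} ≤ Λ on a convex open set containing X − Y. Let (φ, ψ) be a pair of optimal Kantorovich potentials for T_c(μ,ν) with 0 ≤ φ ≤ 1 and −1 ≤ ψ ≤ 0. Then the maps x ↦ φ(x) − (Λ/2)‖x‖² on X and y ↦ ψ(y) − (Λ/2)‖y‖² on Y are concave and 2Λ-Lipschitz, and bounded in absolute value by 2Λ. -/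
open MeasureTheory

def IsCoupling {d : ℕ}
    (π : Measure (EuclideanSpace ℝ (Fin d) × EuclideanSpace ℝ (Fin d)))
    (μ ν : Measure (EuclideanSpace ℝ (Fin d))) : Prop :=
  π.map Prod.fst = μ ∧ π.map Prod.snd = ν

noncomputable def transportCost {d : ℕ}
    (c : EuclideanSpace ℝ (Fin d) → EuclideanSpace ℝ (Fin d) → ℝ)
    (μ ν : Measure (EuclideanSpace ℝ (Fin d))) : ℝ :=
  sInf {t | ∃ π : Measure (EuclideanSpace ℝ (Fin d) × EuclideanSpace ℝ (Fin d)),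
    IsCoupling π μ ν ∧ t = ∫ p, c p.1 p.2 ∂π}

/-!
Write `φ x - (Λ/2)‖x‖² = inf_y [h (x - y) - ψ y - (Λ/2)‖x‖²]`. Each term has gradient
`g (x - y) - Λ x`, which is monotone decreasing (`⟪∇u - ∇v, u - v⟫ ≤ Λ‖u - v‖² - Λ‖u - v‖² = 0`)
because `g` is `Λ`-Lipschitz, so the term is concave; on the unit ball its gradient has norm at most
`2Λ`, so it is `2Λ`-Lipschitz. Both properties survive infima of families bounded below. The bound
`2Λ` on the values follows from `|φ|, |ψ| ≤ 1` and `‖x‖ ≤ 1`.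
-/

open InnerProductSpace Set AffineMap
open scoped Pointwise RealInnerProductSpace

section Infimum

variable {E ι : Type*} [Nonempty ι] {s : Set E} {F : ι → E → ℝ}

theorem ConcaveOn.ciInf [AddCommMonoid E] [Module ℝ E] (hF : ∀ i, ConcaveOn ℝ s (F i))
    (hbdd : ∀ x ∈ s, BddBelow (range fun i => F i x)) :
    ConcaveOn ℝ s fun x => ⨅ i, F i x := by
  refine ⟨(hF (Classical.arbitrary ι)).1, fun a ha b hb ta tb hta htb hab => le_ciInf fun i => ?_⟩
  dsimp only
  calc ta • (⨅ i, F i a) + tb • (⨅ i, F i b) ≤ ta • F i a + tb • F i b := by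
        gcongr
        · exact ciInf_le (hbdd a ha) i
        · exact ciInf_le (hbdd b hb) i
    _ ≤ F i (ta • a + tb • b) := (hF i).2 ha hb hta htb hab

theorem LipschitzOnWith.ciInf [PseudoMetricSpace E] {K : NNReal}
    (hF : ∀ i, LipschitzOnWith K (F i) s)
    (hbdd : ∀ x ∈ s, BddBelow (range fun i => F i x)) :
    LipschitzOnWith K (fun x => ⨅ i, F i x) s :=
  LipschitzOnWith.of_le_add_mul K fun x hx _ hy => le_ciInf_add fun i =>
    (ciInf_le (hbdd x hx) i).trans ((hF i).le_add_mul hx hy)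

end Infimum

theorem concaveOn_of_concaveOn_comp_lineMap {E : Type*} [AddCommGroup E] [Module ℝ E] {s : Set E}
    {f : E → ℝ} (hs : Convex ℝ s)
    (hf : ∀ a ∈ s, ∀ b ∈ s, ConcaveOn ℝ (Icc (0 : ℝ) 1) (f ∘ lineMap a b)) : ConcaveOn ℝ s f := by
  refine ⟨hs, fun a ha b hb ta tb hta htb hab => ?_⟩
  have := (hf a ha b hb).2 (left_mem_Icc.2 zero_le_one) (right_mem_Icc.2 zero_le_one) hta htb hab
  simp only [Function.comp_apply, Convex.combo_affine_apply hab, lineMap_apply_zero,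
    lineMap_apply_one] at this
  exact this

section Gradient

variable {E : Type*} [NormedAddCommGroup E] [InnerProductSpace ℝ E] [CompleteSpace E]
  {f : E → ℝ} {f' : E → E} {s : Set E}

theorem HasGradientAt.sub_const {x g : E} (hf : HasGradientAt f g x) (c : ℝ) :
    HasGradientAt (fun x => f x - c) g x :=
  (hasFDerivAt_sub_const_iff c).2 hf

theorem HasGradientAt.comp_sub_const {x a g : E} (hf : HasGradientAt f g (x - a)) :
    HasGradientAt (fun x => f (x - a)) g x :=
  (hf.hasFDerivAt.comp x (hasFDerivAt_sub_const a) :)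

theorem HasGradientAt.comp_neg {x g : E} (hf : HasGradientAt f g (-x)) :
    HasGradientAt (fun x => f (-x)) (-g) x := by
  rw [hasGradientAt_iff_hasFDerivAt] at hf ⊢
  refine (hf.comp x (hasFDerivAt_id x).neg).congr_fderiv ?_
  ext v
  simp

theorem HasGradientAt.sub_half_mul_norm_sq {x g : E} (hf : HasGradientAt f g x) (Λ : ℝ) :
    HasGradientAt (fun x => f x - Λ / 2 * ‖x‖ ^ 2) (g - Λ • x) x := by
  rw [hasGradientAt_iff_hasFDerivAt] at hf ⊢
  refine (hf.sub ((hasStrictFDerivAt_norm_sq x).hasFDerivAt.const_mul (Λ / 2))).congr_fderiv ?_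
  ext v
  simp only [sub_apply, toDual_apply_apply, smul_apply,
    coe_innerSL_apply, nsmul_eq_mul, Nat.cast_ofNat, smul_eq_mul, map_sub, map_smul]
  ring

theorem concaveOn_of_inner_gradient_sub_nonpos (hs : Convex ℝ s)
    (hf : ∀ x ∈ s, HasGradientAt f (f' x) x) (hf' : ∀ x ∈ s, ∀ y ∈ s, ⟪f' x - f' y, x - y⟫ ≤ 0) :
    ConcaveOn ℝ s f := by
  refine concaveOn_of_concaveOn_comp_lineMap hs fun a ha b hb => ?_
  have hmem : ∀ t ∈ Icc (0 : ℝ) 1, lineMap a b t ∈ s := fun t ht => hs.lineMap_mem ha hb ht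
  have hderiv : ∀ t ∈ Icc (0 : ℝ) 1,
      HasDerivAt (f ∘ lineMap a b) ⟪f' (lineMap a b t), b - a⟫ t := fun t ht => by
    simpa using (hf _ (hmem t ht)).hasFDerivAt.comp_hasDerivAt t hasDerivAt_lineMap
  refine AntitoneOn.concaveOn_of_deriv (convex_Icc 0 1)
    (fun t ht => (hderiv t ht).continuousAt.continuousWithinAt) ?_ ?_ <;> rw [interior_Icc]
  · exact fun t ht => (hderiv t (Ioo_subset_Icc_self ht)).differentiableAt.differentiableWithinAt
  intro t ht u hu htu
  rw [(hderiv t (Ioo_subset_Icc_self ht)).deriv, (hderiv u (Ioo_subset_Icc_self hu)).deriv]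
  rcases htu.eq_or_lt with rfl | htu
  · rfl
  have hsub : lineMap a b u - lineMap a b t = (u - t) • (b - a) := by
    simp only [lineMap_apply_module']
    module
  have := hf' _ (hmem u (Ioo_subset_Icc_self hu)) _ (hmem t (Ioo_subset_Icc_self ht))
  rw [hsub, real_inner_smul_right, inner_sub_left] at this
  nlinarith

theorem concaveOn_sub_half_mul_norm_sq {Λ : ℝ} (hs : Convex ℝ s)
    (hf : ∀ x ∈ s, HasGradientAt f (f' x) x)
    (hf' : ∀ x ∈ s, ∀ y ∈ s, ‖f' x - f' y‖ ≤ Λ * ‖x - y‖) :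
    ConcaveOn ℝ s fun x => f x - Λ / 2 * ‖x‖ ^ 2 := by
  refine concaveOn_of_inner_gradient_sub_nonpos hs (fun x hx => (hf x hx).sub_half_mul_norm_sq Λ)
    fun x hx y hy => ?_
  have hsplit : f' x - Λ • x - (f' y - Λ • y) = (f' x - f' y) - Λ • (x - y) := by module
  calc ⟪f' x - Λ • x - (f' y - Λ • y), x - y⟫ = ⟪f' x - f' y, x - y⟫ - Λ * ‖x - y‖ ^ 2 := by
        rw [hsplit, inner_sub_left, real_inner_smul_left, real_inner_self_eq_norm_sq]
    _ ≤ ‖f' x - f' y‖ * ‖x - y‖ - Λ * ‖x - y‖ ^ 2 := by gcongr; exact real_inner_le_norm _ _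
    _ ≤ Λ * ‖x - y‖ * ‖x - y‖ - Λ * ‖x - y‖ ^ 2 := by gcongr; exact hf' x hx y hy
    _ = 0 := by ring

theorem lipschitzOnWith_sub_half_mul_norm_sq {Λ : ℝ} (hΛ : 0 ≤ Λ) (hs : Convex ℝ s)
    (hs₁ : s ⊆ Metric.closedBall 0 1) (hf : ∀ x ∈ s, HasGradientAt f (f' x) x)
    (hf' : ∀ x ∈ s, ‖f' x‖ ≤ Λ) :
    LipschitzOnWith (2 * Λ).toNNReal (fun x => f x - Λ / 2 * ‖x‖ ^ 2) s := by
  refine hs.lipschitzOnWith_of_nnnorm_hasFDerivWithin_le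
    (fun x hx => ((hf x hx).sub_half_mul_norm_sq Λ).hasFDerivAt.hasFDerivWithinAt) fun x hx => ?_
  rw [Real.le_toNNReal_iff_coe_le (by positivity), coe_nnnorm, LinearIsometryEquiv.norm_map]
  calc ‖f' x - Λ • x‖ ≤ ‖f' x‖ + ‖Λ • x‖ := norm_sub_le _ _
    _ = ‖f' x‖ + Λ * ‖x‖ := by rw [norm_smul, Real.norm_of_nonneg hΛ]
    _ ≤ Λ + Λ * 1 := by gcongr; exacts [hf' x hx, mem_closedBall_zero_iff.1 (hs₁ hx)]
    _ = 2 * Λ := by ring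

theorem concaveOn_and_lipschitzOnWith_sub_half_mul_norm_sq_of_eq_csInf
    {s T Z : Set E} {Λ m : ℝ} (hΛ : 0 ≤ Λ) (hs : Convex ℝ s) (hs₁ : s ⊆ Metric.closedBall 0 1)
    (hT : T.Nonempty) (hsT : ∀ x ∈ s, ∀ t ∈ T, x - t ∈ Z) {k : E → ℝ} {G : E → E}
    (hk : ∀ z ∈ Z, HasGradientAt k (G z) z) (hG : ∀ z ∈ Z, ‖G z‖ ≤ Λ)
    (hG' : ∀ z ∈ Z, ∀ z' ∈ Z, ‖G z - G z'‖ ≤ Λ * ‖z - z'‖) {p Φ : E → ℝ}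
    (hm : ∀ x ∈ s, ∀ t ∈ T, m ≤ k (x - t) - p t)
    (hΦ : ∀ x ∈ s, Φ x = sInf ((fun t => k (x - t) - p t) '' T)) :
    ConcaveOn ℝ s (fun x => Φ x - Λ / 2 * ‖x‖ ^ 2) ∧
      LipschitzOnWith (2 * Λ).toNNReal (fun x => Φ x - Λ / 2 * ‖x‖ ^ 2) s := by
  have := hT.to_subtype
  set A : T → E → ℝ := fun t x => k (x - t) - p t - Λ / 2 * ‖x‖ ^ 2
  have hgrad : ∀ t : T, ∀ x ∈ s, HasGradientAt (fun x => k (x - t) - p t) (G (x - t)) x :=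
    fun t x hx => (hk _ (hsT x hx t t.2)).comp_sub_const.sub_const _
  have hbdd : ∀ x ∈ s, BddBelow (range fun t : T => k (x - t) - p t) := fun x hx =>
    ⟨m, by rintro _ ⟨t, rfl⟩; exact hm x hx t t.2⟩
  have hAbdd : ∀ x ∈ s, BddBelow (range fun t => A t x) := fun x hx =>
    ⟨m - Λ / 2 * ‖x‖ ^ 2, by rintro _ ⟨t, rfl⟩; exact sub_le_sub_right (hm x hx t t.2) _⟩
  have hA : EqOn (fun x => Φ x - Λ / 2 * ‖x‖ ^ 2) (fun x => ⨅ t, A t x) s := fun x hx => by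
    dsimp only
    rw [hΦ x hx, image_eq_range]
    exact ciInf_sub (hbdd x hx) _
  have hconc : ∀ t, ConcaveOn ℝ s (A t) := fun t =>
    concaveOn_sub_half_mul_norm_sq hs (hgrad t) fun x hx y hy => by
      simpa only [sub_sub_sub_cancel_right] using hG' _ (hsT x hx t t.2) _ (hsT y hy t t.2)
  have hlip : ∀ t, LipschitzOnWith (2 * Λ).toNNReal (A t) s := fun t =>
    lipschitzOnWith_sub_half_mul_norm_sq hΛ hs hs₁ (hgrad t) fun x hx => hG _ (hsT x hx t t.2)
  refine ⟨(ConcaveOn.ciInf hconc hAbdd).congr hA.symm, fun x hx y hy => ?_⟩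
  rw [hA hx, hA hy]
  exact LipschitzOnWith.ciInf hlip hAbdd hx hy

end Gradient

theorem abs_sub_half_mul_norm_sq_le {E : Type*} [SeminormedAddCommGroup E] {a Λ : ℝ} {x : E}
    (hΛ : 1 ≤ Λ) (ha : |a| ≤ 1) (hx : x ∈ Metric.closedBall 0 1) :
    |a - Λ / 2 * ‖x‖ ^ 2| ≤ 2 * Λ := by
  have hx₁ : ‖x‖ ^ 2 ≤ 1 := pow_le_one₀ (norm_nonneg x) (mem_closedBall_zero_iff.1 hx)
  rw [abs_le] at ha ⊢
  constructor <;> nlinarith [sq_nonneg ‖x‖]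

theorem stmt_3_general {d : ℕ} (X Y : Set (EuclideanSpace ℝ (Fin d)))
    (hXconv : Convex ℝ X) (hXne : X.Nonempty)
    (hYconv : Convex ℝ Y) (hYne : Y.Nonempty)
    (hXball : X ⊆ Metric.closedBall 0 1) (hYball : Y ⊆ Metric.closedBall 0 1)
    (h : EuclideanSpace ℝ (Fin d) → ℝ) (g : EuclideanSpace ℝ (Fin d) → EuclideanSpace ℝ (Fin d))
    (hrange : ∀ z, 0 ≤ h z ∧ h z ≤ 1)
    (Λ : ℝ) (hΛ1 : 1 ≤ Λ)
    (Z₁ : Set (EuclideanSpace ℝ (Fin d)))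
    (hZ₁ : ∀ x ∈ X, ∀ y ∈ Y, x - y ∈ Z₁)
    (hgrad : ∀ z ∈ Z₁, HasGradientAt h (g z) z)
    (hgbd : ∀ z ∈ Z₁, ‖g z‖ ≤ Λ)
    (hgLip : ∀ z ∈ Z₁, ∀ z' ∈ Z₁, ‖g z - g z'‖ ≤ Λ * ‖z - z'‖)
    (φ ψ : EuclideanSpace ℝ (Fin d) → ℝ)
    (hφbd : ∀ x ∈ X, 0 ≤ φ x ∧ φ x ≤ 1) (hψbd : ∀ y ∈ Y, -1 ≤ ψ y ∧ ψ y ≤ 0)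
    (hφconj : ∀ x ∈ X, φ x = sInf ((fun y => h (x - y) - ψ y) '' Y))
    (hψconj : ∀ y ∈ Y, ψ y = sInf ((fun x => h (x - y) - φ x) '' X)) :
    (ConcaveOn ℝ X (fun x => φ x - Λ / 2 * ‖x‖ ^ 2) ∧
      LipschitzOnWith (Real.toNNReal (2 * Λ)) (fun x => φ x - Λ / 2 * ‖x‖ ^ 2) X ∧
      ∀ x ∈ X, |φ x - Λ / 2 * ‖x‖ ^ 2| ≤ 2 * Λ) ∧
    (ConcaveOn ℝ Y (fun y => ψ y - Λ / 2 * ‖y‖ ^ 2) ∧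
      LipschitzOnWith (Real.toNNReal (2 * Λ)) (fun y => ψ y - Λ / 2 * ‖y‖ ^ 2) Y ∧
      ∀ y ∈ Y, |ψ y - Λ / 2 * ‖y‖ ^ 2| ≤ 2 * Λ) := by
  have hΛ : 0 ≤ Λ := by linarith
  have hφ₁ : ∀ x ∈ X, |φ x| ≤ 1 := fun x hx => abs_le.2 ⟨by linarith [(hφbd x hx).1], (hφbd x hx).2⟩
  have hψ₁ : ∀ y ∈ Y, |ψ y| ≤ 1 := fun y hy => abs_le.2 ⟨(hψbd y hy).1, by linarith [(hψbd y hy).2]⟩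
  obtain ⟨hφconc, hφlip⟩ := concaveOn_and_lipschitzOnWith_sub_half_mul_norm_sq_of_eq_csInf hΛ
    hXconv hXball hYne hZ₁ hgrad hgbd hgLip (m := 0)
    (fun x _ y hy => by linarith [(hrange (x - y)).1, (hψbd y hy).2]) hφconj
  -- `ψ` is the c-transform of `φ` for the reflected cost `z ↦ h (-z)`, since `x - y = -(y - x)`.
  obtain ⟨hψconc, hψlip⟩ := concaveOn_and_lipschitzOnWith_sub_half_mul_norm_sq_of_eq_csInf hΛ
    hYconv hYball hXne (Z := -Z₁) (k := fun z => h (-z)) (G := fun z => -g (-z))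
    (fun y hy x hx => by simpa only [mem_neg, neg_sub] using hZ₁ x hx y hy)
    (fun z hz => (hgrad _ hz).comp_neg) (fun z hz => by simpa only [norm_neg] using hgbd _ hz)
    (fun z hz z' hz' => by
      simpa only [neg_sub_neg, norm_sub_rev, sub_neg_eq_add, neg_add_eq_sub] using hgLip _ hz _ hz')
    (p := φ) (m := -1)
    (fun y _ x hx => by simp only [neg_sub]; linarith [(hrange (x - y)).1, (hφbd x hx).2])
    (fun y hy => by simpa only [neg_sub] using hψconj y hy)
  exact ⟨⟨hφconc, hφlip, fun x hx => abs_sub_half_mul_norm_sq_le hΛ1 (hφ₁ x hx) (hXball hx)⟩,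
    hψconc, hψlip, fun y hy => abs_sub_half_mul_norm_sq_le hΛ1 (hψ₁ y hy) (hYball hy)⟩

/-- Semiconcavity of optimal Kantorovich potentials: for a `C²` cost `h` with norm `≤ Λ`
on a neighbourhood of `X - Y`, the maps `x ↦ φ(x) - (Λ/2)‖x‖²` and `y ↦ ψ(y) - (Λ/2)‖y‖²`
are concave, `2Λ`-Lipschitz and bounded by `2Λ` on `X` and `Y` respectively. -/
theorem stmt_3 {d : ℕ} (X Y : Set (EuclideanSpace ℝ (Fin d)))
    (hXconv : Convex ℝ X) (hXcomp : IsCompact X) (hXne : X.Nonempty)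
    (hYconv : Convex ℝ Y) (hYcomp : IsCompact Y) (hYne : Y.Nonempty)
    (hXball : X ⊆ Metric.closedBall 0 1) (hYball : Y ⊆ Metric.closedBall 0 1)
    (hZball : ∀ x ∈ X, ∀ y ∈ Y, x - y ∈ Metric.closedBall (0 : EuclideanSpace ℝ (Fin d)) 1)
    (h : EuclideanSpace ℝ (Fin d) → ℝ) (g : EuclideanSpace ℝ (Fin d) → EuclideanSpace ℝ (Fin d))
    (hconv : ConvexOn ℝ Set.univ h) (heven : ∀ z, h (-z) = h z)
    (hrange : ∀ z, 0 ≤ h z ∧ h z ≤ 1)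
    (Λ : ℝ) (hΛ1 : 1 ≤ Λ)
    (Z₁ : Set (EuclideanSpace ℝ (Fin d))) (hZ₁open : IsOpen Z₁) (hZ₁conv : Convex ℝ Z₁)
    (hZ₁ : ∀ x ∈ X, ∀ y ∈ Y, x - y ∈ Z₁)
    (hgrad : ∀ z ∈ Z₁, HasGradientAt h (g z) z)
    (hgbd : ∀ z ∈ Z₁, ‖g z‖ ≤ Λ)
    (hgLip : ∀ z ∈ Z₁, ∀ z' ∈ Z₁, ‖g z - g z'‖ ≤ Λ * ‖z - z'‖)
    (μ ν : Measure (EuclideanSpace ℝ (Fin d)))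
    [IsProbabilityMeasure μ] [IsProbabilityMeasure ν] (hμX : μ X = 1) (hνY : ν Y = 1)
    (φ ψ : EuclideanSpace ℝ (Fin d) → ℝ)
    (hφbd : ∀ x ∈ X, 0 ≤ φ x ∧ φ x ≤ 1) (hψbd : ∀ y ∈ Y, -1 ≤ ψ y ∧ ψ y ≤ 0)
    (hfeas : ∀ x ∈ X, ∀ y ∈ Y, φ x + ψ y ≤ h (x - y))
    (hφconj : ∀ x ∈ X, φ x = sInf ((fun y => h (x - y) - ψ y) '' Y))
    (hψconj : ∀ y ∈ Y, ψ y = sInf ((fun x => h (x - y) - φ x) '' X))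
    (hopt : (∫ x, φ x ∂μ) + (∫ y, ψ y ∂ν) = transportCost (fun x y => h (x - y)) μ ν) :
    (ConcaveOn ℝ X (fun x => φ x - Λ / 2 * ‖x‖ ^ 2) ∧
      LipschitzOnWith (Real.toNNReal (2 * Λ)) (fun x => φ x - Λ / 2 * ‖x‖ ^ 2) X ∧
      ∀ x ∈ X, |φ x - Λ / 2 * ‖x‖ ^ 2| ≤ 2 * Λ) ∧
    (ConcaveOn ℝ Y (fun y => ψ y - Λ / 2 * ‖y‖ ^ 2) ∧
      LipschitzOnWith (Real.toNNReal (2 * Λ)) (fun y => ψ y - Λ / 2 * ‖y‖ ^ 2) Y ∧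
      ∀ y ∈ Y, |ψ y - Λ / 2 * ‖y‖ ^ 2| ≤ 2 * Λ) :=
  stmt_3_general X Y hXconv hXne hYconv hYne hXball hYball h g hrange Λ hΛ1 Z₁ hZ₁ hgrad hgbd hgLip
    φ ψ hφbd hψbd hφconj hψconj
end

section
/- Let μ be a probability measure on ℝ^d with a density f such that log f is differentiable and ‖∇ log f(x)‖ ≤ γ₁‖x‖ + γ₂ for all x. Then f(x) ≥ exp(−γ₂²) · f(0) · exp(−(1 + γ₁)‖x‖²) for all x ∈ ℝ^d. -/
open MeasureTheory

/-- Anticoncentration for `(γ₁,γ₂)`-regular densities: if `‖∇ log f(x)‖ ≤ γ₁‖x‖ + γ₂`,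
then `f(x) ≥ exp(-γ₂²) f(0) exp(-(1+γ₁)‖x‖²)`. -/
theorem stmt_7 {d : ℕ} (μ : Measure (EuclideanSpace ℝ (Fin d))) [IsProbabilityMeasure μ]
    (f : EuclideanSpace ℝ (Fin d) → ℝ)
    (hfpos : ∀ x, 0 < f x)
    (hdens : μ = volume.withDensity (fun x => ENNReal.ofReal (f x)))
    (g : EuclideanSpace ℝ (Fin d) → EuclideanSpace ℝ (Fin d))
    (γ₁ γ₂ : ℝ) (hγ₁ : 0 < γ₁) (hγ₂ : 0 < γ₂)
    (hgrad : ∀ x, HasGradientAt (fun y => Real.log (f y)) (g x) x)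
    (hreg : ∀ x, ‖g x‖ ≤ γ₁ * ‖x‖ + γ₂) :
    ∀ x, Real.exp (-γ₂ ^ 2) * f 0 * Real.exp (-(1 + γ₁) * ‖x‖ ^ 2) ≤ f x := by
  intro x
  set L : EuclideanSpace ℝ (Fin d) → ℝ := fun y => Real.log (f y) with hL
  have hmvt : ‖L x - L 0‖ ≤ (γ₁ * ‖x‖ + γ₂) * ‖x - 0‖ := by
    apply (convex_closedBall (0 : EuclideanSpace ℝ (Fin d)) ‖x‖).norm_image_sub_le_of_norm_hasFDerivWithin_le
      (f' := fun y => (InnerProductSpace.toDual ℝ _ (g y) : _))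
    · intro y _
      exact ((hgrad y).hasFDerivAt).hasFDerivWithinAt
    · intro y hy
      simp only [Metric.mem_closedBall, dist_zero_right] at hy
      calc ‖(InnerProductSpace.toDual ℝ _ (g y) : _)‖ = ‖g y‖ := by
            simp
        _ ≤ γ₁ * ‖y‖ + γ₂ := hreg y
        _ ≤ γ₁ * ‖x‖ + γ₂ := by nlinarith
    · simp [Metric.mem_closedBall]
    · simp
  rw [sub_zero] at hmvt
  have hbound : L 0 - L x ≤ (γ₁ * ‖x‖ + γ₂) * ‖x‖ := by
    have := abs_le.mp hmvt
    linarith [this.1]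
  have key : L 0 - γ₂ ^ 2 - (1 + γ₁) * ‖x‖ ^ 2 ≤ L x := by
    nlinarith [norm_nonneg x, sq_nonneg (γ₂ - ‖x‖)]
  have h0 : Real.exp (-γ₂ ^ 2) * f 0 * Real.exp (-(1 + γ₁) * ‖x‖ ^ 2)
      = Real.exp (L 0 - γ₂ ^ 2 - (1 + γ₁) * ‖x‖ ^ 2) := by
    rw [show L 0 - γ₂ ^ 2 - (1 + γ₁) * ‖x‖ ^ 2 = (-γ₂ ^ 2) + L 0 + (-(1 + γ₁) * ‖x‖ ^ 2) by ring,
      Real.exp_add, Real.exp_add, hL]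
    simp [Real.exp_log (hfpos 0)]
  rw [h0]
  calc Real.exp (L 0 - γ₂ ^ 2 - (1 + γ₁) * ‖x‖ ^ 2) ≤ Real.exp (L x) := Real.exp_le_exp.mpr key
    _ = f x := Real.exp_log (hfpos x)
end

section
/- Let c(x,y) = h(x−y) where h is convex, even, lower semi-continuous, h(0) = 0, and h(z) = ω(‖z‖) for ‖z‖ > 1 with ω : (1,∞) → (1,∞) convex differentiable satisfying κ^{−1} t^{p−1} ≤ ω'(t) ≤ κ t^{p−1} for some p > 1, κ ≥ 1. Let R, r ≥ 4 and let φ : ℝ^d → ℝ be c-concave with |φ| ≤ R on B(0,r). Then sup over y ∈ ∂^c φ(B(0, r/2)) of ‖y‖^{p−1} ≤ C(r^{p−1} + R), where C depends only on p and κ. -/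
/-- `φ` is `c`-concave for the cost `c(x,y) = h(x-y)`: an infimum of the functions
`y ↦ c(x,y) - λ` over a nonempty index set `A`. -/
def CConcave {d : ℕ} (c : EuclideanSpace ℝ (Fin d) → EuclideanSpace ℝ (Fin d) → ℝ)
    (φ : EuclideanSpace ℝ (Fin d) → ℝ) : Prop :=
  ∃ A : Set (EuclideanSpace ℝ (Fin d) × ℝ), A.Nonempty ∧
    ∀ y, φ y = sInf ((fun a => c a.1 y - a.2) '' A)

/-- The `c`-superdifferential of `φ` as a set of pairs `(x, y)`. -/
def cSuperdiff {d : ℕ} (c : EuclideanSpace ℝ (Fin d) → EuclideanSpace ℝ (Fin d) → ℝ)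
    (φ : EuclideanSpace ℝ (Fin d) → ℝ) : Set (EuclideanSpace ℝ (Fin d) × EuclideanSpace ℝ (Fin d)) :=
  {q | ∀ v, c q.1 q.2 - φ q.1 ≤ c v q.2 - φ v}

/-- Bound on the `c`-superdifferential of a bounded `c`-concave function: for costs with
`ω'`-growth of order `p-1`, `sup_{y ∈ ∂^c φ(B(0,r/2))} ‖y‖^{p-1} ≤ C (r^{p-1} + R)`
whenever `|φ| ≤ R` on `B(0,r)`, with `C` depending only on `p` and `κ`. -/
theorem stmt_10 (p κ : ℝ) (hp : 1 < p) (hκ : 1 ≤ κ) :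
    ∃ C > 0, ∀ (d : ℕ) (h : EuclideanSpace ℝ (Fin d) → ℝ) (ω ω' : ℝ → ℝ)
      (φ : EuclideanSpace ℝ (Fin d) → ℝ) (R r : ℝ),
      ConvexOn ℝ Set.univ h → (∀ z, h (-z) = h z) → LowerSemicontinuous h →
      h 0 = 0 →
      (∀ z : EuclideanSpace ℝ (Fin d), 1 < ‖z‖ → h z = ω ‖z‖) →
      ConvexOn ℝ (Set.Ioi 1) ω →
      (∀ t : ℝ, 1 < t → HasDerivAt ω (ω' t) t) →
      (∀ t : ℝ, 1 < t → 1 < ω t) →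
      (∀ t : ℝ, 1 < t → κ⁻¹ * t ^ (p - 1) ≤ ω' t ∧ ω' t ≤ κ * t ^ (p - 1)) →
      4 ≤ R → 4 ≤ r →
      CConcave (fun x y => h (x - y)) φ →
      (∀ x ∈ Metric.closedBall (0 : EuclideanSpace ℝ (Fin d)) r, |φ x| ≤ R) →
      ∀ x ∈ Metric.closedBall (0 : EuclideanSpace ℝ (Fin d)) (r / 2), ∀ y,
        (x, y) ∈ cSuperdiff (fun x y => h (x - y)) φ →
        ‖y‖ ^ (p - 1) ≤ C * (r ^ (p - 1) + R) := by
  refine ⟨2 ^ p * κ, by positivity, ?_⟩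
  intro d h ω ω' φ R r _ _ _ _ hω _ hω' _ hωbd hR hr _ hφ x hx y hxy
  have hp0 : (0:ℝ) < p - 1 := by linarith
  have hr0 : (0:ℝ) < r := by linarith
  have hR0 : (0:ℝ) ≤ R := by linarith
  have hκ0 : (0:ℝ) < κ := by linarith
  have h2p : (2:ℝ) ^ (p - 1) ≤ 2 ^ p :=
    Real.rpow_le_rpow_left_iff (by norm_num) |>.mpr (by linarith)
  have h2pos : (0:ℝ) < (2:ℝ) ^ p := Real.rpow_pos_of_pos two_pos p
  have hrp : (0:ℝ) ≤ r ^ (p - 1) := Real.rpow_nonneg hr0.le _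
  by_cases hy : ‖y‖ ≤ 2 * r
  · calc ‖y‖ ^ (p - 1) ≤ (2 * r) ^ (p - 1) :=
        Real.rpow_le_rpow (norm_nonneg _) hy hp0.le
      _ = 2 ^ (p - 1) * r ^ (p - 1) := Real.mul_rpow (by norm_num) hr0.le
      _ ≤ 2 ^ p * r ^ (p - 1) := mul_le_mul_of_nonneg_right h2p hrp
      _ ≤ 2 ^ p * (r ^ (p - 1) + R) := by
          apply mul_le_mul_of_nonneg_left (by linarith) h2pos.le
      _ ≤ 2 ^ p * κ * (r ^ (p - 1) + R) := by
          apply mul_le_mul_of_nonneg_right _ (by linarith)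
          nlinarith
  · push_neg at hy
    have hxnorm : ‖x‖ ≤ r / 2 := by
      simpa [Metric.mem_closedBall, dist_zero_right] using hx
    set n := ‖x - y‖ with hn_def
    have hn1x : 1 < ‖x - y‖ := by
      have h1 := norm_sub_norm_le y x
      have h2 : ‖y - x‖ = ‖x - y‖ := norm_sub_rev y x
      linarith
    have hn : ‖y‖ - r / 2 ≤ n := by
      have h1 := norm_sub_norm_le y x
      have h2 : ‖y - x‖ = n := norm_sub_rev y x
      linarith
    clear_value n
    have hny : ‖y‖ / 2 + r / 2 ≤ n := by linarith
    have hn0 : (0:ℝ) < n := by linarith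
    obtain ⟨a, ha_def⟩ : ∃ a : ℝ, a = n - r / 2 := ⟨_, rfl⟩
    have ha : ‖y‖ / 2 ≤ a := by rw [ha_def]; linarith
    have h1a : 1 < a := by linarith
    have hab : a < n := by rw [ha_def]; linarith
    obtain ⟨t, ht_def⟩ : ∃ t : ℝ, t = (r / 2) / n := ⟨_, rfl⟩
    have ht0 : 0 < t := by rw [ht_def]; positivity
    have htn : t * n = r / 2 := by rw [ht_def]; field_simp
    have ht1 : t < 1 := by rw [ht_def, div_lt_one hn0]; linarith
    obtain ⟨v, hv_def⟩ : ∃ v : EuclideanSpace ℝ (Fin d), v = x + t • (y - x) := ⟨_, rfl⟩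
    have hvy : v - y = (1 - t) • (x - y) := by rw [hv_def]; module
    have hnvy : ‖v - y‖ = a := by
      rw [hvy, norm_smul, Real.norm_eq_abs, abs_of_nonneg (by linarith), ← hn_def,
        ha_def]
      linear_combination -htn
    have hvx : ‖v - x‖ = r / 2 := by
      have hvx' : v - x = t • (y - x) := by rw [hv_def]; module
      rw [hvx', norm_smul, Real.norm_eq_abs, abs_of_nonneg ht0.le, norm_sub_rev,
        ← hn_def]
      exact htn
    have hvnorm : ‖v‖ ≤ r := by
      calc ‖v‖ ≤ ‖v - x‖ + ‖x‖ := by simpa using norm_add_le (v - x) x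
        _ ≤ r := by rw [hvx]; linarith
    have hφx : |φ x| ≤ R := hφ x (by
      simp only [Metric.mem_closedBall, dist_zero_right]; linarith)
    have hφv : |φ v| ≤ R := hφ v (by
      simp only [Metric.mem_closedBall, dist_zero_right]; exact hvnorm)
    have hsd : h (x - y) - φ x ≤ h (v - y) - φ v := hxy v
    have hhx : h (x - y) = ω n := by rw [hω _ hn1x, ← hn_def]
    have hhv : h (v - y) = ω a := by rw [hω _ (by rw [hnvy]; exact h1a), hnvy]
    have hkey : ω n - ω a ≤ 2 * R := by
      have h1 := abs_le.mp hφx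
      have h2 := abs_le.mp hφv
      rw [hhx] at hsd; rw [hhv] at hsd
      linarith
    have hcont : ContinuousOn ω (Set.Icc a n) := fun s hs =>
      ((hω' s (by linarith [hs.1])).continuousAt).continuousWithinAt
    have hderiv : ∀ s ∈ Set.Ioo a n, HasDerivAt ω (ω' s) s := fun s hs =>
      hω' s (by linarith [hs.1])
    obtain ⟨ξ, hξ, hslope⟩ := exists_hasDerivAt_eq_slope ω ω' hab hcont hderiv
    have hξ1 : 1 < ξ := by linarith [hξ.1]
    have hlow : κ⁻¹ * ξ ^ (p - 1) ≤ ω' ξ := (hωbd ξ hξ1).1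
    have hna : n - a = r / 2 := by rw [ha_def]; ring
    have hωeq : ω n - ω a = ω' ξ * (r / 2) := by
      rw [hslope, hna]; field_simp
    have haξ : a ^ (p - 1) ≤ ξ ^ (p - 1) :=
      Real.rpow_le_rpow (by linarith) hξ.1.le hp0.le
    have hκinv : (0:ℝ) < κ⁻¹ := by positivity
    have hap0 : (0:ℝ) ≤ a ^ (p - 1) := Real.rpow_nonneg (by linarith) _
    have hbound : κ⁻¹ * a ^ (p - 1) * (r / 2) ≤ 2 * R := by
      calc κ⁻¹ * a ^ (p - 1) * (r / 2) ≤ κ⁻¹ * ξ ^ (p - 1) * (r / 2) :=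
            mul_le_mul_of_nonneg_right
              (mul_le_mul_of_nonneg_left haξ hκinv.le) (by linarith)
        _ ≤ ω' ξ * (r / 2) := mul_le_mul_of_nonneg_right hlow (by linarith)
        _ = ω n - ω a := hωeq.symm
        _ ≤ 2 * R := hkey
    have hap : a ^ (p - 1) ≤ κ * R := by
      have hAnn : (0:ℝ) ≤ κ⁻¹ * a ^ (p - 1) := by positivity
      have h4 : κ⁻¹ * a ^ (p - 1) * 2 ≤ κ⁻¹ * a ^ (p - 1) * (r / 2) :=
        mul_le_mul_of_nonneg_left (by linarith) hAnn
      have h5 : κ⁻¹ * a ^ (p - 1) ≤ R := by linarith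
      have h6 : κ * (κ⁻¹ * a ^ (p - 1)) ≤ κ * R :=
        mul_le_mul_of_nonneg_left h5 hκ0.le
      calc a ^ (p - 1) = κ * (κ⁻¹ * a ^ (p - 1)) := by
            field_simp
        _ ≤ κ * R := h6
    have hκR0 : (0:ℝ) ≤ κ * R := by positivity
    calc ‖y‖ ^ (p - 1) ≤ (2 * a) ^ (p - 1) :=
        Real.rpow_le_rpow (norm_nonneg _) (by linarith) hp0.le
      _ = 2 ^ (p - 1) * a ^ (p - 1) := Real.mul_rpow (by norm_num) (by linarith)
      _ ≤ 2 ^ (p - 1) * (κ * R) :=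
          mul_le_mul_of_nonneg_left hap (Real.rpow_nonneg (by norm_num) _)
      _ ≤ 2 ^ p * (κ * R) := mul_le_mul_of_nonneg_right h2p hκR0
      _ = 2 ^ p * κ * R := by ring
      _ ≤ 2 ^ p * κ * (r ^ (p - 1) + R) := by
          apply mul_le_mul_of_nonneg_left (by linarith) (by positivity)
end

section
/- For p, r > 1 and d ≥ 1, the function h(x) = ‖x‖_{ℓ_r}^p belongs to the Hölder class C^{min(2, p, r)}(B(0,2)): h is differentiable on ℝ^d with ∂h/∂x_l = p x_l |x_l|^{r−2} ‖x‖_{ℓ_r}^{p−r}, and each partial derivative is Hölder continuous on B(0,2) with exponent min(1, p−1, r−1) and constant depending only on d, p, r. -/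
/-- The gradient of `x ↦ ‖x‖_{ℓ_r}^p`, with components
`p x_l |x_l|^{r-2} ‖x‖_{ℓ_r}^{p-r}`. -/
noncomputable def gradLrp (d : ℕ) (p r : ℝ) (x : EuclideanSpace ℝ (Fin d)) :
    EuclideanSpace ℝ (Fin d) :=
  (EuclideanSpace.equiv (Fin d) ℝ).symm
    (fun l => p * x l * |x l| ^ (r - 2) * (∑ i, |x i| ^ r) ^ ((p - r) / r))

/-!
Away from the origin the gradient formula is the chain rule; at the origin
`h x ≤ (d ^ (1/r) * ‖x‖) ^ p = o(‖x‖)` because `p > 1`.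

For the Hölder bound let `A = ‖x‖_r ≤ B = ‖y‖_r` and `ψ u = u * |u| ^ (r - 2)`, so that
`∂_l h x - ∂_l h y = p * (ψ x_l * (A ^ (p - r) - B ^ (p - r)) + B ^ (p - r) * (ψ x_l - ψ y_l))`.
Since `|ψ x_l| ≤ A ^ (r - 1)`, Bernoulli's inequality applied to `A / B` bounds the first term by
`c * B ^ (p - 2) * (B - A)`, and Minkowski gives `B - A ≤ ‖x - y‖_r`. The Hölder continuity of `ψ`
on `[-B, B]` bounds the second by `c * B ^ (p - 1 - β) * |x_l - y_l| ^ β` with `β = min 1 (r - 1)`.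
Both have the shape `B ^ (e - β) * t ^ β` with `t ≤ 2 * B`, which on a bounded set is at most a
constant times `t ^ α` for every `α ≤ min β e`: trade `t ^ (β - α) ≤ (2 * B) ^ (β - α)`.
-/

open Real Filter Topology Asymptotics

section rpow
variable {a b c q s t u v A B M α β p r : ℝ}

lemma one_sub_rpow_le (hs0 : 0 ≤ s) (hs1 : s ≤ 1) :
    1 - s ^ q ≤ max 1 q * (1 - s) := by
  rcases le_total q 1 with hq1 | hq1
  · have := self_le_rpow_of_le_one hs0 hs1 hq1
    nlinarith [le_max_left 1 q]
  · have := one_add_mul_self_le_rpow_one_add (s := s - 1) (by linarith) hq1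
    rw [add_sub_cancel] at this
    nlinarith [le_max_right 1 q]

lemma rpow_sub_rpow_le (hb : 0 ≤ b) (hba : b ≤ a) :
    a ^ q - b ^ q ≤ max 1 q * a ^ (q - 1) * (a - b) := by
  rcases hba.lt_or_eq' with ha | rfl
  · have ha0 : 0 < a := hb.trans_lt ha
    have hbq : b ^ q = (b / a) ^ q * a ^ q := by
      rw [div_rpow hb ha0.le, div_mul_cancel₀ _ (rpow_pos_of_pos ha0 q).ne']
    have hsa : a ^ (q - 1) * (a - b) = a ^ q * (1 - b / a) := by
      rw [rpow_sub_one ha0.ne']; field_simp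
    have := one_sub_rpow_le (div_nonneg hb ha0.le) ((div_le_one ha0).2 hba) (q := q)
    rw [hbq, mul_assoc, hsa]
    nlinarith [rpow_pos_of_pos ha0 q]
  · simp

lemma rpow_sub_mul_rpow_le_of_le_mul (hα : 0 < α) (hαβ : α ≤ β) (hc : 0 ≤ c) (ht : 0 ≤ t)
    (htB : t ≤ c * B) (e : ℝ) :
    B ^ (e - β) * t ^ β ≤ c ^ (β - α) * B ^ (e - α) * t ^ α := by
  rcases ht.lt_or_eq' with ht | rfl
  · have hB : 0 < B := pos_of_mul_pos_right (ht.trans_le htB) hc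
    calc B ^ (e - β) * t ^ β = B ^ (e - β) * t ^ (β - α) * t ^ α := by
          rw [mul_assoc, ← rpow_add ht, sub_add_cancel]
      _ ≤ B ^ (e - β) * (c * B) ^ (β - α) * t ^ α := by gcongr
      _ = c ^ (β - α) * B ^ (e - α) * t ^ α := by
          rw [mul_rpow hc hB.le, mul_left_comm, ← rpow_add hB, sub_add_sub_cancel]
  · rw [zero_rpow (hα.trans_le hαβ).ne', zero_rpow hα.ne']; simp

lemma rpow_mul_abs_rpow_sub_rpow_le (hp : 1 ≤ p) (hr : 1 < r) (hA : 0 ≤ A) (hAB : A ≤ B) :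
    A ^ (r - 1) * |A ^ (p - r) - B ^ (p - r)| ≤ max 1 |p - r| * B ^ (p - 2) * (B - A) := by
  rcases hA.eq_or_lt with rfl | hA
  · rw [zero_rpow (by linarith), zero_mul]
    exact mul_nonneg (mul_nonneg (by positivity) (rpow_nonneg hAB _)) (by linarith)
  have hB : 0 < B := hA.trans_le hAB
  rcases le_total r p with hrp | hpr
  · have hBpow : B ^ (p - 2) = B ^ (r - 1) * B ^ (p - r - 1) := by
      rw [← rpow_add hB]; ring_nf
    calc A ^ (r - 1) * |A ^ (p - r) - B ^ (p - r)| = A ^ (r - 1) * (B ^ (p - r) - A ^ (p - r)) := by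
          rw [abs_sub_comm, abs_of_nonneg (sub_nonneg.2 (rpow_le_rpow hA.le hAB (by linarith)))]
      _ ≤ B ^ (r - 1) * (max 1 (p - r) * B ^ (p - r - 1) * (B - A)) := by
          gcongr
          · exact sub_nonneg.2 (rpow_le_rpow hA.le hAB (by linarith))
          · exact rpow_sub_rpow_le hA.le hAB
      _ = max 1 |p - r| * B ^ (p - 2) * (B - A) := by
          rw [abs_of_nonneg (by linarith), hBpow]; ring
  -- `p - r < 0` here: factor out `A ^ (p - 1) * B ^ (p - r)` to get an increment of `t ^ (r - p)`.
  · have hsplit : A ^ (r - 1) * (A ^ (p - r) - B ^ (p - r))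
        = A ^ (p - 1) * B ^ (p - r) * (B ^ (r - p) - A ^ (r - p)) := by
      have e1 : A ^ (r - 1) * A ^ (p - r) = A ^ (p - 1) := by rw [← rpow_add hA]; ring_nf
      have e2 : A ^ (r - 1) = A ^ (p - 1) * A ^ (r - p) := by rw [← rpow_add hA]; ring_nf
      have e3 : B ^ (p - r) * B ^ (r - p) = 1 := by rw [← rpow_add hB]; simp
      linear_combination e1 - B ^ (p - r) * e2 - A ^ (p - 1) * e3
    calc A ^ (r - 1) * |A ^ (p - r) - B ^ (p - r)|
        = A ^ (p - 1) * B ^ (p - r) * (B ^ (r - p) - A ^ (r - p)) := by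
          rw [abs_of_nonneg (sub_nonneg.2 (rpow_le_rpow_of_nonpos hA hAB (by linarith))), hsplit]
      _ ≤ B ^ (p - 1) * B ^ (p - r) * (max 1 (r - p) * B ^ (r - p - 1) * (B - A)) := by
          gcongr
          · exact sub_nonneg.2 (rpow_le_rpow hA.le hAB (by linarith))
          · exact rpow_sub_rpow_le hA.le hAB
      _ = max 1 |p - r| * B ^ (p - 2) * (B - A) := by
          have hBpow : B ^ (p - 2) = B ^ (p - 1) * (B ^ (p - r) * B ^ (r - p - 1)) := by
            rw [← rpow_add hB, ← rpow_add hB]; ring_nf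
          rw [abs_of_nonpos (by linarith), neg_sub, hBpow]; ring

lemma mul_abs_rpow_sub_one_of_nonneg (hq : q ≠ 0) (hu : 0 ≤ u) : u * |u| ^ (q - 1) = u ^ q := by
  rw [abs_of_nonneg hu]
  rcases hu.eq_or_lt with rfl | hu
  · simp [zero_rpow hq]
  · rw [rpow_sub_one hu.ne', mul_div_cancel₀ _ hu.ne']

lemma abs_mul_abs_rpow_sub_one (hq : q ≠ 0) (u : ℝ) : |u * |u| ^ (q - 1)| = |u| ^ q := by
  rw [abs_mul, abs_of_nonneg (rpow_nonneg (abs_nonneg u) _)]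
  simpa using mul_abs_rpow_sub_one_of_nonneg hq (abs_nonneg u)

lemma abs_rpow_sub_rpow_le (hq : 0 < q) (ha : 0 ≤ a) (hb : 0 ≤ b) (haB : a ≤ B) (hbB : b ≤ B) :
    |a ^ q - b ^ q| ≤ max 1 q * B ^ (q - min 1 q) * |a - b| ^ min 1 q := by
  wlog hba : b ≤ a generalizing a b
  · rw [abs_sub_comm, abs_sub_comm a]; exact this hb ha hbB haB (le_of_not_ge hba)
  rw [abs_of_nonneg (sub_nonneg.2 hba), abs_of_nonneg (sub_nonneg.2 (rpow_le_rpow hb hba hq.le))]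
  calc a ^ q - b ^ q ≤ max 1 q * (a ^ (q - 1) * (a - b) ^ (1 : ℝ)) := by
        rw [rpow_one, ← mul_assoc]; exact rpow_sub_rpow_le hb hba
    _ ≤ max 1 q * (1 ^ (1 - min 1 q) * a ^ (q - min 1 q) * (a - b) ^ min 1 q) := by
        gcongr max 1 q * ?_
        exact rpow_sub_mul_rpow_le_of_le_mul (lt_min one_pos hq) (min_le_left _ _) zero_le_one
          (by linarith) (by linarith) q
    _ ≤ max 1 q * B ^ (q - min 1 q) * (a - b) ^ min 1 q := by
        rw [one_rpow, one_mul, ← mul_assoc]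
        gcongr
        exact sub_nonneg.2 (min_le_right _ _)

lemma rpow_add_rpow_le (hq : 0 < q) (hβ : 0 ≤ β) (hβq : β ≤ q) (ha : 0 ≤ a) (hb : 0 ≤ b)
    (haB : a ≤ B) (hbB : b ≤ B) : a ^ q + b ^ q ≤ 2 * B ^ (q - β) * (a + b) ^ β := by
  have key : ∀ x, 0 ≤ x → x ≤ B → x ≤ a + b → x ^ q ≤ B ^ (q - β) * (a + b) ^ β := by
    intro x hx hxB hxab
    calc x ^ q = x ^ (q - β) * x ^ β := by
          rw [← rpow_add' hx (by simpa using hq.ne'), sub_add_cancel]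
      _ ≤ B ^ (q - β) * (a + b) ^ β :=
          mul_le_mul (rpow_le_rpow hx hxB (sub_nonneg.2 hβq)) (rpow_le_rpow hx hxab hβ)
            (rpow_nonneg hx _) (rpow_nonneg (hx.trans hxB) _)
  linarith [key a ha haB (by linarith), key b hb hbB (by linarith)]

lemma abs_mul_abs_rpow_sub_le (hq : 0 < q) (hu : |u| ≤ B) (hv : |v| ≤ B) :
    |u * |u| ^ (q - 1) - v * |v| ^ (q - 1)| ≤ max 2 q * B ^ (q - min 1 q) * |u - v| ^ min 1 q := by
  wlog hu0 : 0 ≤ u generalizing u v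
  · have := this (u := -u) (v := -v) (by rwa [abs_neg]) (by rwa [abs_neg]) (by linarith)
    rwa [abs_neg, abs_neg, neg_mul, neg_mul, neg_sub_neg, abs_sub_comm, neg_sub_neg,
      abs_sub_comm v] at this
  have huB : u ≤ B := (le_abs_self u).trans hu
  have hBq : 0 ≤ B ^ (q - min 1 q) := rpow_nonneg ((abs_nonneg u).trans hu) _
  rcases le_total 0 v with hv0 | hv0
  · rw [mul_abs_rpow_sub_one_of_nonneg hq.ne' hu0, mul_abs_rpow_sub_one_of_nonneg hq.ne' hv0]
    calc _ ≤ max 1 q * B ^ (q - min 1 q) * |u - v| ^ min 1 q :=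
          abs_rpow_sub_rpow_le hq hu0 hv0 huB ((le_abs_self v).trans hv)
      _ ≤ max 2 q * B ^ (q - min 1 q) * |u - v| ^ min 1 q := by
          gcongr ?_ * _ * _
          exact max_le_max_right q one_le_two
  · have hv' : v * |v| ^ (q - 1) = -(-v) ^ q := by
      rw [← mul_abs_rpow_sub_one_of_nonneg hq.ne' (neg_nonneg.2 hv0), abs_neg]; ring
    rw [mul_abs_rpow_sub_one_of_nonneg hq.ne' hu0, hv', sub_neg_eq_add,
      abs_of_nonneg (add_nonneg (rpow_nonneg hu0 _) (rpow_nonneg (neg_nonneg.2 hv0) _)),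
      abs_of_nonneg (by linarith), sub_eq_add_neg]
    calc _ ≤ 2 * B ^ (q - min 1 q) * (u + -v) ^ min 1 q :=
          rpow_add_rpow_le hq (le_min zero_le_one hq.le) (min_le_right _ _) hu0 (by linarith)
            huB (by rw [← abs_of_nonpos hv0]; exact hv)
      _ ≤ max 2 q * B ^ (q - min 1 q) * (u + -v) ^ min 1 q :=
          mul_le_mul_of_nonneg_right (mul_le_mul_of_nonneg_right (le_max_left 2 q) hBq)
            (rpow_nonneg (by linarith) _)

end rpow

section lrNorm
variable {ι : Type*} [Fintype ι] {r : ℝ}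

noncomputable def lrNorm (r : ℝ) (x : ι → ℝ) : ℝ := (∑ i, |x i| ^ r) ^ (1 / r)

lemma lrNorm_nonneg (r : ℝ) (x : ι → ℝ) : 0 ≤ lrNorm r x :=
  rpow_nonneg (Finset.sum_nonneg fun _ _ => rpow_nonneg (abs_nonneg _) _) _

lemma sum_abs_rpow_rpow_div (x : ι → ℝ) (q : ℝ) :
    (∑ i, |x i| ^ r) ^ (q / r) = lrNorm r x ^ q := by
  rw [lrNorm, ← rpow_mul (Finset.sum_nonneg fun _ _ => rpow_nonneg (abs_nonneg _) _),
    one_div_mul_eq_div]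

lemma abs_le_lrNorm (hr : 0 < r) (x : ι → ℝ) (i : ι) : |x i| ≤ lrNorm r x := by
  calc |x i| = (|x i| ^ r) ^ (1 / r) := by
        rw [← rpow_mul (abs_nonneg _), mul_one_div_cancel hr.ne', rpow_one]
    _ ≤ lrNorm r x := by
      unfold lrNorm
      gcongr
      exact Finset.single_le_sum (fun j _ => rpow_nonneg (abs_nonneg (x j)) r) (Finset.mem_univ i)

lemma lrNorm_le_add_lrNorm_sub (hr : 1 ≤ r) (x y : ι → ℝ) :
    lrNorm r y ≤ lrNorm r x + lrNorm r (x - y) := by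
  have h := Real.Lp_add_le Finset.univ x (y - x) hr
  simp only [Pi.sub_apply, add_sub_cancel, abs_sub_comm (y _)] at h
  exact h

lemma lrNorm_le_mul_norm (hr : 0 < r) (x : EuclideanSpace ℝ ι) :
    lrNorm r x ≤ (Fintype.card ι : ℝ) ^ (1 / r) * ‖x‖ := by
  calc lrNorm r x ≤ (∑ _i : ι, ‖x‖ ^ r) ^ (1 / r) := by
        unfold lrNorm
        gcongr with i
        simpa using PiLp.norm_apply_le x i
    _ = (Fintype.card ι : ℝ) ^ (1 / r) * ‖x‖ := by
        rw [Finset.sum_const, Finset.card_univ, nsmul_eq_mul,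
          mul_rpow (by positivity) (by positivity), ← rpow_mul (norm_nonneg _),
          mul_one_div_cancel hr.ne', rpow_one]

end lrNorm

section gradient
variable {ι : Type*} [Fintype ι] {d : ℕ} {p r : ℝ}

lemma hasFDerivAt_sum_abs_rpow (hr : 1 < r) (x : EuclideanSpace ℝ ι) :
    HasFDerivAt (fun x : EuclideanSpace ℝ ι => ∑ i, |x i| ^ r)
      (∑ i, (r * |x i| ^ (r - 2) * x i) • EuclideanSpace.proj (𝕜 := ℝ) i) x :=
  HasFDerivAt.fun_sum fun i _ =>
    (hasDerivAt_abs_rpow (x i) hr).comp_hasFDerivAt (f := fun x : EuclideanSpace ℝ ι => x i) x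
      (EuclideanSpace.proj (𝕜 := ℝ) i).hasFDerivAt

lemma hasFDerivAt_sum_abs_rpow_rpow_div_zero (hp : 1 < p) (hr : 0 < r) :
    HasFDerivAt (fun x : EuclideanSpace ℝ ι => (∑ i, |x i| ^ r) ^ (p / r))
      (0 : EuclideanSpace ℝ ι →L[ℝ] ℝ) 0 := by
  have hbound : (fun x : EuclideanSpace ℝ ι => (∑ i, |x i| ^ r) ^ (p / r)) =O[𝓝 0]
      fun x : EuclideanSpace ℝ ι => ‖x‖ ^ p := by
    refine .of_bound (((Fintype.card ι : ℝ) ^ (1 / r)) ^ p) (.of_forall fun x => ?_)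
    rw [sum_abs_rpow_rpow_div, norm_of_nonneg (rpow_nonneg (lrNorm_nonneg r x) p),
      norm_of_nonneg (rpow_nonneg (norm_nonneg x) p), ← mul_rpow (by positivity) (norm_nonneg x)]
    gcongr
    · exact lrNorm_nonneg r x
    · exact lrNorm_le_mul_norm hr x
  have hsmall : (fun x : EuclideanSpace ℝ ι => ‖x‖ ^ p) =o[𝓝 0] fun x => x := by
    simpa [zero_rpow (by linarith : p ≠ 0)] using
      (hasFDerivAt_norm_rpow (0 : EuclideanSpace ℝ ι) hp).isLittleO
  refine .of_isLittleO ?_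
  simpa [zero_rpow (by positivity : p / r ≠ 0), zero_rpow hr.ne'] using
    hbound.trans_isLittleO hsmall

lemma hasGradientAt_gradLrp (hp : 1 < p) (hr : 1 < r) (x : EuclideanSpace ℝ (Fin d)) :
    HasGradientAt (fun x : EuclideanSpace ℝ (Fin d) => (∑ i, |x i| ^ r) ^ (p / r))
      (gradLrp d p r x) x := by
  rw [hasGradientAt_iff_hasFDerivAt]
  rcases eq_or_ne x 0 with rfl | hx
  · have h0 : gradLrp d p r 0 = 0 := by ext l; simp [gradLrp]
    rw [h0, map_zero]
    exact hasFDerivAt_sum_abs_rpow_rpow_div_zero hp (by linarith)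
  have hS : ∑ i, |x i| ^ r ≠ 0 := by
    obtain ⟨i, hi⟩ : ∃ i, x i ≠ 0 := by
      by_contra! h
      exact hx (by ext i; exact h i)
    exact (Finset.sum_pos' (fun j _ => rpow_nonneg (abs_nonneg _) _)
      ⟨i, Finset.mem_univ i, rpow_pos_of_pos (abs_pos.2 hi) _⟩).ne'
  refine ((hasFDerivAt_sum_abs_rpow hr x).rpow_const (p := p / r) (Or.inl hS)).congr_fderiv ?_
  ext y
  have hexp : p / r - 1 = (p - r) / r := by field_simp
  simp only [gradLrp]
  simp [PiLp.inner_apply, hexp]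
  rw [Finset.mul_sum]
  refine Finset.sum_congr rfl fun i _ => ?_
  field_simp

end gradient

section holder
variable {d : ℕ} {p r α u v A B M : ℝ}

lemma gradLrp_apply (x : EuclideanSpace ℝ (Fin d)) (l : Fin d) :
    gradLrp d p r x l = p * (x l * |x l| ^ (r - 2)) * lrNorm r x ^ (p - r) := by
  show p * x l * |x l| ^ (r - 2) * (∑ i, |x i| ^ r) ^ ((p - r) / r) = _
  rw [sum_abs_rpow_rpow_div]
  ring

lemma rpow_mul_abs_rpow_sub_rpow_le_sub_rpow (hr : 1 < r) (hα : 0 < α) (hα1 : α ≤ 1)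
    (hαp : α ≤ p - 1) (hA : 0 ≤ A) (hAB : A ≤ B) (hBM : B ≤ M) :
    A ^ (r - 1) * |A ^ (p - r) - B ^ (p - r)| ≤ max 1 |p - r| * M ^ (p - 1 - α) * (B - A) ^ α := by
  calc A ^ (r - 1) * |A ^ (p - r) - B ^ (p - r)|
      ≤ max 1 |p - r| * (B ^ (p - 1 - 1) * (B - A) ^ (1 : ℝ)) := by
        rw [rpow_one, ← mul_assoc, show p - 1 - 1 = p - 2 by ring]
        exact rpow_mul_abs_rpow_sub_rpow_le (by linarith) hr hA hAB
    _ ≤ max 1 |p - r| * (1 ^ (1 - α) * B ^ (p - 1 - α) * (B - A) ^ α) := by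
        gcongr max 1 |p - r| * ?_
        exact rpow_sub_mul_rpow_le_of_le_mul hα hα1 zero_le_one (by linarith) (by linarith) _
    _ ≤ max 1 |p - r| * M ^ (p - 1 - α) * (B - A) ^ α := by
        rw [one_rpow, one_mul, ← mul_assoc]
        gcongr
        linarith

lemma rpow_mul_abs_mul_abs_rpow_sub_le (hr : 1 < r) (hα : 0 < α) (hα1 : α ≤ 1)
    (hαp : α ≤ p - 1) (hαr : α ≤ r - 1) (hu : |u| ≤ B) (hv : |v| ≤ B) (hBM : B ≤ M) :
    B ^ (p - r) * |u * |u| ^ (r - 2) - v * |v| ^ (r - 2)| ≤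
      max 2 (r - 1) * 2 ^ (min 1 (r - 1) - α) * M ^ (p - 1 - α) * |u - v| ^ α := by
  set β := min 1 (r - 1)
  have hψ := abs_mul_abs_rpow_sub_le (q := r - 1) (by linarith) hu hv
  rw [show r - 1 - 1 = r - 2 by ring] at hψ
  rcases ((abs_nonneg u).trans hu).eq_or_lt with rfl | hB
  · simp [abs_nonpos_iff.1 hu, abs_nonpos_iff.1 hv, zero_rpow hα.ne']
  calc B ^ (p - r) * |u * |u| ^ (r - 2) - v * |v| ^ (r - 2)|
      ≤ B ^ (p - r) * (max 2 (r - 1) * B ^ (r - 1 - β) * |u - v| ^ β) := by gcongr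
    _ = max 2 (r - 1) * (B ^ (p - 1 - β) * |u - v| ^ β) := by
        rw [show p - 1 - β = (p - r) + (r - 1 - β) by ring, rpow_add hB]; ring
    _ ≤ max 2 (r - 1) * (2 ^ (β - α) * B ^ (p - 1 - α) * |u - v| ^ α) := by
        gcongr max 2 (r - 1) * ?_
        refine rpow_sub_mul_rpow_le_of_le_mul hα (le_min hα1 hαr) zero_le_two (abs_nonneg _) ?_ _
        linarith [abs_sub u v]
    _ ≤ max 2 (r - 1) * 2 ^ (β - α) * M ^ (p - 1 - α) * |u - v| ^ α := by
        rw [← mul_assoc, ← mul_assoc]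
        gcongr

lemma abs_gradLrp_sub_le (hr : 1 < r) (hα : 0 < α) (hα1 : α ≤ 1) (hαp : α ≤ p - 1)
    (hαr : α ≤ r - 1) {x y : EuclideanSpace ℝ (Fin d)} (hxy : lrNorm r x ≤ lrNorm r y)
    (hyM : lrNorm r y ≤ M) (l : Fin d) :
    |gradLrp d p r x l - gradLrp d p r y l| ≤ p * M ^ (p - 1 - α) *
      (max 1 |p - r| * lrNorm r (x - y) ^ α +
        max 2 (r - 1) * 2 ^ (min 1 (r - 1) - α) * |x l - y l| ^ α) := by
  set A := lrNorm r x
  set B := lrNorm r y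
  have hp : 0 < p := by linarith
  have hB : 0 ≤ B := lrNorm_nonneg r y
  have hψx : |x l * |x l| ^ (r - 2)| ≤ A ^ (r - 1) := by
    rw [show r - 2 = r - 1 - 1 by ring, abs_mul_abs_rpow_sub_one (by linarith)]
    exact rpow_le_rpow (abs_nonneg _) (abs_le_lrNorm (by linarith) x l) (by linarith)
  have hT1 := rpow_mul_abs_rpow_sub_rpow_le_sub_rpow hr hα hα1 hαp (lrNorm_nonneg r x) hxy hyM
  have hT2 := rpow_mul_abs_mul_abs_rpow_sub_le hr hα hα1 hαp hαr
    ((abs_le_lrNorm (by linarith) x l).trans hxy) (abs_le_lrNorm (by linarith) y l) hyM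
  have hBA : (B - A) ^ α ≤ lrNorm r (x - y) ^ α := by
    have := lrNorm_le_add_lrNorm_sub hr.le x y
    rw [← WithLp.ofLp_sub] at this
    exact rpow_le_rpow (sub_nonneg.2 hxy) (by linarith) hα.le
  rw [gradLrp_apply, gradLrp_apply]
  calc |p * (x l * |x l| ^ (r - 2)) * A ^ (p - r) - p * (y l * |y l| ^ (r - 2)) * B ^ (p - r)|
      = |p * (x l * |x l| ^ (r - 2) * (A ^ (p - r) - B ^ (p - r)) +
          B ^ (p - r) * (x l * |x l| ^ (r - 2) - y l * |y l| ^ (r - 2)))| := by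
        congr 1; ring
    _ ≤ p * (A ^ (r - 1) * |A ^ (p - r) - B ^ (p - r)| +
          B ^ (p - r) * |x l * |x l| ^ (r - 2) - y l * |y l| ^ (r - 2)|) := by
        rw [abs_mul, abs_of_pos hp]
        gcongr
        refine (abs_add_le _ _).trans (add_le_add ?_ ?_)
        · rw [abs_mul]; exact mul_le_mul_of_nonneg_right hψx (abs_nonneg _)
        · rw [abs_mul, abs_of_nonneg (rpow_nonneg hB _)]
    _ ≤ p * (max 1 |p - r| * M ^ (p - 1 - α) * lrNorm r (x - y) ^ α +
          max 2 (r - 1) * 2 ^ (min 1 (r - 1) - α) * M ^ (p - 1 - α) * |x l - y l| ^ α) := by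
        have hM : 0 ≤ M ^ (p - 1 - α) := rpow_nonneg (hB.trans hyM) _
        gcongr p * (?_ + ?_)
        exact hT1.trans (by gcongr)
    _ = p * M ^ (p - 1 - α) * (max 1 |p - r| * lrNorm r (x - y) ^ α +
          max 2 (r - 1) * 2 ^ (min 1 (r - 1) - α) * |x l - y l| ^ α) := by ring

end holder

theorem stmt_14_general (d : ℕ) (p r : ℝ) (hp : 1 < p) (hr : 1 < r) :
    (∀ x : EuclideanSpace ℝ (Fin d),
      HasGradientAt (fun x : EuclideanSpace ℝ (Fin d) => (∑ i, |x i| ^ r) ^ (p / r))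
        (gradLrp d p r x) x) ∧
    ∃ C > 0, ∀ l : Fin d, ∀ x ∈ Metric.closedBall (0 : EuclideanSpace ℝ (Fin d)) 2,
      ∀ y ∈ Metric.closedBall (0 : EuclideanSpace ℝ (Fin d)) 2,
      |gradLrp d p r x l - gradLrp d p r y l| ≤
        C * ‖x - y‖ ^ (min 1 (min (p - 1) (r - 1))) := by
  refine ⟨hasGradientAt_gradLrp hp hr, ?_⟩
  set α := min 1 (min (p - 1) (r - 1))
  have hα : 0 < α := lt_min one_pos (lt_min (by linarith) (by linarith))
  have hαp : α ≤ p - 1 := (min_le_right _ _).trans (min_le_left _ _)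
  have hαr : α ≤ r - 1 := (min_le_right _ _).trans (min_le_right _ _)
  set D := (d : ℝ) ^ (1 / r)
  have hD (z : EuclideanSpace ℝ (Fin d)) : lrNorm r z ≤ D * ‖z‖ := by
    simpa only [Fintype.card_fin] using lrNorm_le_mul_norm (by linarith) z
  set K := p * (D * 2) ^ (p - 1 - α) *
    (max 1 |p - r| * D ^ α + max 2 (r - 1) * 2 ^ (min 1 (r - 1) - α))
  refine ⟨max K 1, one_pos.trans_le (le_max_right _ _), fun l x hx y hy => ?_⟩
  wlog hxy : lrNorm r x ≤ lrNorm r y generalizing x y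
  · rw [abs_sub_comm, norm_sub_rev]
    exact this y hy x hx (le_of_not_ge hxy)
  have hyM : lrNorm r y ≤ D * 2 := (hD y).trans (by gcongr; simpa using hy)
  calc |gradLrp d p r x l - gradLrp d p r y l|
      ≤ p * (D * 2) ^ (p - 1 - α) * (max 1 |p - r| * lrNorm r (x - y) ^ α +
          max 2 (r - 1) * 2 ^ (min 1 (r - 1) - α) * |x l - y l| ^ α) :=
        abs_gradLrp_sub_le hr hα (min_le_left _ _) hαp hαr hxy hyM l
    _ ≤ p * (D * 2) ^ (p - 1 - α) * (max 1 |p - r| * (D * ‖x - y‖) ^ α +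
          max 2 (r - 1) * 2 ^ (min 1 (r - 1) - α) * ‖x - y‖ ^ α) := by
        gcongr
        · exact lrNorm_nonneg r _
        · exact hD _
        · simpa using PiLp.norm_apply_le (x - y) l
    _ = K * ‖x - y‖ ^ α := by rw [mul_rpow (by positivity) (norm_nonneg _)]; ring
    _ ≤ max K 1 * ‖x - y‖ ^ α := by gcongr; exact le_max_left _ _

/-- For `p, r > 1`, the function `h(x) = ‖x‖_{ℓ_r}^p` is differentiable with the stated
gradient, and each partial derivative is `min(1, p-1, r-1)`-Hölder on `B(0,2)` with a
constant depending only on `d, p, r`; hence `h ∈ C^{min(2,p,r)}(B(0,2))`. -/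
theorem stmt_14 (d : ℕ) (p r : ℝ) (hd : 1 ≤ d) (hp : 1 < p) (hr : 1 < r) :
    (∀ x : EuclideanSpace ℝ (Fin d),
      HasGradientAt (fun x : EuclideanSpace ℝ (Fin d) => (∑ i, |x i| ^ r) ^ (p / r))
        (gradLrp d p r x) x) ∧
    ∃ C > 0, ∀ l : Fin d, ∀ x ∈ Metric.closedBall (0 : EuclideanSpace ℝ (Fin d)) 2,
      ∀ y ∈ Metric.closedBall (0 : EuclideanSpace ℝ (Fin d)) 2,
      |gradLrp d p r x l - gradLrp d p r y l| ≤
        C * ‖x - y‖ ^ (min 1 (min (p - 1) (r - 1))) :=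
  stmt_14_general d p r hp hr
end

section
/- For 1 < p < 2 and ε ∈ (0,1], the function h_{p,ε}(x) = (‖x‖² + ε^{2/p})^{p/2} − ε on ℝ^d is twice continuously differentiable, and its Hessian satisfies ‖∇² h_{p,ε}(x)‖_op ≤ C ε^{1−2/p} for ‖x‖ ≤ ε^{1/p} and ‖∇² h_{p,ε}(x)‖_op ≤ C ‖x‖^{p−2} for ‖x‖ > ε^{1/p}, with C a universal constant depending only on p. Consequently ‖h_{p,ε}‖_{C²(B(0,r))} ≤ c₁ ε^{1−2/p} r^p for all r ≥ 1. -/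
/-!
Write `u = ‖x‖² + a` with `a = ε^{2/p}`. The gradient of `u^{p/2}` is `p u^{p/2-1} ⟨x, ·⟩` and its
Hessian is `p u^{p/2-1} ⟨·,·⟩ + p(p-2) u^{p/2-2} ⟨x,·⟩⟨x,·⟩`; since `‖x‖² ≤ u`, the Hessian has norm
at most `(|p| + |p(p-2)|) u^{p/2-1}`. As `p/2 - 1 < 0`, the weight `u^{p/2-1}` is bounded both by
`a^{p/2-1} = ε^{1-2/p}` and by `‖x‖^{p-2}`. On the ball of radius `r ≥ 1`, subadditivity of
`t ↦ t^{p/2}` bounds the value by `r^p`, the gradient is at most `p ε^{1-2/p} r`, and `ε^{1-2/p} ≥ 1`.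
-/

theorem norm_iteratedFDeriv_two_eq_of_hasFDerivAt {𝕜 E F : Type*} [NontriviallyNormedField 𝕜]
    [NormedAddCommGroup E] [NormedSpace 𝕜 E] [NormedAddCommGroup F] [NormedSpace 𝕜 F]
    {f : E → F} {f' : E → E →L[𝕜] F} {f'' : E →L[𝕜] E →L[𝕜] F} {x : E}
    (hf : ∀ y, HasFDerivAt f (f' y) y) (hf' : HasFDerivAt f' f'' x) :
    ‖iteratedFDeriv 𝕜 2 f x‖ = ‖f''‖ := by
  rw [← norm_iteratedFDeriv_fderiv, norm_iteratedFDeriv_one, funext fun y => (hf y).fderiv,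
    hf'.fderiv]

theorem abs_rpow_sq_add_sub_rpow_le {p a t : ℝ} (hp : 0 ≤ p) (hp2 : p ≤ 2) (ha : 0 ≤ a)
    (ht : 0 ≤ t) : |(t ^ 2 + a) ^ (p / 2) - a ^ (p / 2)| ≤ t ^ p := by
  have hsq : (t ^ 2) ^ (p / 2) = t ^ p := by
    rw [← Real.rpow_natCast, ← Real.rpow_mul ht]; ring_nf
  rw [abs_of_nonneg (sub_nonneg.2 (by gcongr; linarith [sq_nonneg t])), sub_le_iff_le_add, ← hsq]
  exact Real.rpow_add_le_add_rpow (by positivity) ha (by linarith) (by linarith)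

theorem rpow_sq_add_le_rpow_of_le_two {p a : ℝ} (hp2 : p ≤ 2) (ha : 0 < a) (t : ℝ) :
    (t ^ 2 + a) ^ (p / 2 - 1) ≤ a ^ (p / 2 - 1) :=
  Real.rpow_le_rpow_of_nonpos ha (le_add_of_nonneg_left (by positivity)) (by linarith)

theorem rpow_sq_add_le_rpow_sub_two {p a t : ℝ} (hp2 : p ≤ 2) (ha : 0 ≤ a) (ht : 0 < t) :
    (t ^ 2 + a) ^ (p / 2 - 1) ≤ t ^ (p - 2) := by
  have hsq : (t ^ 2) ^ (p / 2 - 1) = t ^ (p - 2) := by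
    rw [← Real.rpow_natCast, ← Real.rpow_mul ht.le]; ring_nf
  rw [← hsq]
  exact Real.rpow_le_rpow_of_nonpos (by positivity) (le_add_of_nonneg_right ha) (by linarith)

namespace SmoothedNormRpow

variable {E : Type*} [NormedAddCommGroup E] [InnerProductSpace ℝ E] {p a : ℝ}

noncomputable def innerBilin : E →L[ℝ] E →L[ℝ] ℝ := innerSL ℝ

@[simp] theorem innerBilin_apply (x y : E) : innerBilin x y = inner ℝ x y := rfl

theorem norm_innerBilin_apply (x : E) : ‖innerBilin x‖ = ‖x‖ := innerSL_apply_norm ℝ x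

theorem norm_innerBilin_le : ‖(innerBilin : E →L[ℝ] E →L[ℝ] ℝ)‖ ≤ 1 :=
  ContinuousLinearMap.opNorm_le_bound _ zero_le_one fun y => by
    rw [norm_innerBilin_apply, one_mul]

noncomputable def grad (p a : ℝ) (x : E) : E →L[ℝ] ℝ :=
  (p * (‖x‖ ^ 2 + a) ^ (p / 2 - 1)) • innerBilin x

noncomputable def hess (p a : ℝ) (x : E) : E →L[ℝ] E →L[ℝ] ℝ :=
  (p * (‖x‖ ^ 2 + a) ^ (p / 2 - 1)) • innerBilin +
    (p * (p - 2) * (‖x‖ ^ 2 + a) ^ (p / 2 - 2)) • (innerBilin x).smulRight (innerBilin x)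

theorem hasFDerivAt_norm_sq_add (a : ℝ) (x : E) :
    HasFDerivAt (fun y : E => ‖y‖ ^ 2 + a) (2 • innerBilin x) x :=
  (hasStrictFDerivAt_norm_sq x).hasFDerivAt.add_const a

theorem hasFDerivAt (ha : 0 < a) (c : ℝ) (x : E) :
    HasFDerivAt (fun y : E => (‖y‖ ^ 2 + a) ^ (p / 2) - c) (grad p a x) x := by
  have hu : ‖x‖ ^ 2 + a ≠ 0 := by positivity
  refine (((Real.hasDerivAt_rpow_const (p := p / 2) (Or.inl hu)).comp_hasFDerivAt x
    (hasFDerivAt_norm_sq_add a x)).sub_const c).congr_fderiv ?_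
  ext y
  simp only [grad, smul_apply]
  ring

theorem hasFDerivAt_grad (ha : 0 < a) (x : E) :
    HasFDerivAt (grad p a) (hess p a x) x := by
  have hu : ‖x‖ ^ 2 + a ≠ 0 := by positivity
  have hcoeff := ((Real.hasDerivAt_rpow_const (p := p / 2 - 1) (Or.inl hu)).comp_hasFDerivAt x
    (hasFDerivAt_norm_sq_add a x)).const_mul p
  refine (hcoeff.smul innerBilin.hasFDerivAt).congr_fderiv ?_
  ext y z
  have hexp : (‖x‖ ^ 2 + a) ^ (p / 2 - 1 - 1) = (‖x‖ ^ 2 + a) ^ (p / 2 - 2) := by ring_nf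
  simp only [hess, hexp, Function.comp_apply, add_apply, smul_apply, smul_eq_mul, nsmul_eq_mul,
    Nat.cast_ofNat, ContinuousLinearMap.smulRight_apply, innerBilin_apply]
  ring

theorem norm_grad (hp : 0 ≤ p) (ha : 0 ≤ a) (x : E) :
    ‖grad p a x‖ = p * (‖x‖ ^ 2 + a) ^ (p / 2 - 1) * ‖x‖ := by
  rw [grad, norm_smul, norm_innerBilin_apply, Real.norm_of_nonneg (by positivity)]

theorem norm_hess_le (ha : 0 < a) (x : E) :
    ‖hess p a x‖ ≤ (|p| + |p * (p - 2)|) * (‖x‖ ^ 2 + a) ^ (p / 2 - 1) := by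
  have hu : 0 < ‖x‖ ^ 2 + a := by positivity
  have hweight : (‖x‖ ^ 2 + a) ^ (p / 2 - 2) * ‖x‖ ^ 2 ≤ (‖x‖ ^ 2 + a) ^ (p / 2 - 1) := by
    calc (‖x‖ ^ 2 + a) ^ (p / 2 - 2) * ‖x‖ ^ 2
        ≤ (‖x‖ ^ 2 + a) ^ (p / 2 - 2) * (‖x‖ ^ 2 + a) := by gcongr; linarith
      _ = (‖x‖ ^ 2 + a) ^ (p / 2 - 1) := by
        rw [← Real.rpow_add_one hu.ne']; ring_nf
  calc ‖hess p a x‖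
      ≤ ‖p * (‖x‖ ^ 2 + a) ^ (p / 2 - 1)‖ * ‖(innerBilin : E →L[ℝ] E →L[ℝ] ℝ)‖ +
          ‖p * (p - 2) * (‖x‖ ^ 2 + a) ^ (p / 2 - 2)‖ *
            ‖(innerBilin x).smulRight (innerBilin x)‖ := by
        unfold hess
        exact (norm_add_le (E := E →L[ℝ] E →L[ℝ] ℝ) _ _).trans
          (add_le_add (ContinuousLinearMap.opNorm_smul_le _ _)
            (ContinuousLinearMap.opNorm_smul_le _ _))
    _ ≤ |p| * (‖x‖ ^ 2 + a) ^ (p / 2 - 1) * 1 +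
          |p * (p - 2)| * (‖x‖ ^ 2 + a) ^ (p / 2 - 2) * ‖x‖ ^ 2 := by
        rw [ContinuousLinearMap.norm_smulRight_apply, norm_innerBilin_apply, Real.norm_eq_abs,
          Real.norm_eq_abs, abs_mul, abs_mul (p * (p - 2)), abs_of_pos (Real.rpow_pos_of_pos hu _),
          abs_of_pos (Real.rpow_pos_of_pos hu _), ← sq]
        gcongr
        exact norm_innerBilin_le
    _ ≤ |p| * (‖x‖ ^ 2 + a) ^ (p / 2 - 1) * 1 +
          |p * (p - 2)| * (‖x‖ ^ 2 + a) ^ (p / 2 - 1) := by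
        rw [mul_assoc |p * (p - 2)|]
        gcongr
    _ = (|p| + |p * (p - 2)|) * (‖x‖ ^ 2 + a) ^ (p / 2 - 1) := by ring

theorem contDiff (ha : 0 < a) (c : ℝ) :
    ContDiff ℝ 2 (fun x : E => (‖x‖ ^ 2 + a) ^ (p / 2) - c) :=
  (((contDiff_norm_sq ℝ).add contDiff_const).rpow_const_of_ne fun _ => by positivity).sub
    contDiff_const

theorem norm_fderiv (hp : 0 ≤ p) (ha : 0 < a) (c : ℝ) (x : E) :
    ‖fderiv ℝ (fun y : E => (‖y‖ ^ 2 + a) ^ (p / 2) - c) x‖ =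
      p * (‖x‖ ^ 2 + a) ^ (p / 2 - 1) * ‖x‖ := by
  rw [(hasFDerivAt ha c x).fderiv, norm_grad hp ha.le]

theorem norm_iteratedFDeriv_two_le (ha : 0 < a) (c : ℝ) (x : E) :
    ‖iteratedFDeriv ℝ 2 (fun y : E => (‖y‖ ^ 2 + a) ^ (p / 2) - c) x‖ ≤
      (|p| + |p * (p - 2)|) * (‖x‖ ^ 2 + a) ^ (p / 2 - 1) := by
  rw [norm_iteratedFDeriv_two_eq_of_hasFDerivAt (hasFDerivAt ha c) (hasFDerivAt_grad ha x)]
  exact norm_hess_le ha x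

theorem abs_add_norm_fderiv_add_norm_iteratedFDeriv_le (hp1 : 1 ≤ p) (hp2 : p ≤ 2) (ha : 0 < a)
    (ha1 : a ≤ 1) (c : ℝ) {r : ℝ} (hr : 1 ≤ r) {x : E} (hx : ‖x‖ ≤ r) :
    |(‖x‖ ^ 2 + a) ^ (p / 2) - a ^ (p / 2)| +
        ‖fderiv ℝ (fun y : E => (‖y‖ ^ 2 + a) ^ (p / 2) - c) x‖ +
        ‖iteratedFDeriv ℝ 2 (fun y : E => (‖y‖ ^ 2 + a) ^ (p / 2) - c) x‖ ≤
      (1 + p + (|p| + |p * (p - 2)|)) * a ^ (p / 2 - 1) * r ^ p := by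
  have hW : 1 ≤ a ^ (p / 2 - 1) :=
    Real.one_le_rpow_of_pos_of_le_one_of_nonpos ha ha1 (by linarith)
  have hrp : r ≤ r ^ p := by simpa using Real.rpow_le_rpow_of_exponent_le hr hp1
  have hw := rpow_sq_add_le_rpow_of_le_two hp2 ha ‖x‖
  have hvalue : |(‖x‖ ^ 2 + a) ^ (p / 2) - a ^ (p / 2)| ≤ a ^ (p / 2 - 1) * r ^ p :=
    calc _ ≤ ‖x‖ ^ p := abs_rpow_sq_add_sub_rpow_le (by linarith) hp2 ha.le (norm_nonneg x)
      _ ≤ r ^ p := by gcongr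
      _ ≤ a ^ (p / 2 - 1) * r ^ p := le_mul_of_one_le_left (by positivity) hW
  have hgrad : ‖fderiv ℝ (fun y : E => (‖y‖ ^ 2 + a) ^ (p / 2) - c) x‖ ≤
      p * (a ^ (p / 2 - 1) * r ^ p) := by
    rw [norm_fderiv (by linarith) ha c x, mul_assoc]
    exact mul_le_mul_of_nonneg_left (mul_le_mul hw (hx.trans hrp) (norm_nonneg x) (by positivity))
      (by linarith)
  have hhess : ‖iteratedFDeriv ℝ 2 (fun y : E => (‖y‖ ^ 2 + a) ^ (p / 2) - c) x‖ ≤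
      (|p| + |p * (p - 2)|) * (a ^ (p / 2 - 1) * r ^ p) := by
    refine (norm_iteratedFDeriv_two_le ha c x).trans ?_
    gcongr
    exact hw.trans (le_mul_of_one_le_right (by positivity) (Real.one_le_rpow hr (by linarith)))
  linarith

end SmoothedNormRpow

/-- Hessian bounds for `h_{p,ε}(x) = (‖x‖² + ε^{2/p})^{p/2} - ε`, `1 < p < 2`:
`h_{p,ε}` is `C²`, `‖∇²h_{p,ε}(x)‖ ≤ C ε^{1-2/p}` for `‖x‖ ≤ ε^{1/p}`,
`‖∇²h_{p,ε}(x)‖ ≤ C ‖x‖^{p-2}` for `‖x‖ > ε^{1/p}`, and consequently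
`‖h_{p,ε}‖_{C²(B(0,r))} ≤ c₁ ε^{1-2/p} r^p` for all `r ≥ 1`. Constants depend only on `p`. -/
theorem stmt_16 (p : ℝ) (hp1 : 1 < p) (hp2 : p < 2) :
    ∃ C > 0, ∃ c₁ > 0, ∀ (d : ℕ) (ε : ℝ), 0 < ε → ε ≤ 1 →
      ContDiff ℝ 2 (fun x : EuclideanSpace ℝ (Fin d) =>
        (‖x‖ ^ 2 + ε ^ (2 / p)) ^ (p / 2) - ε) ∧
      (∀ x : EuclideanSpace ℝ (Fin d), ‖x‖ ≤ ε ^ (1 / p) →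
        ‖iteratedFDeriv ℝ 2 (fun x : EuclideanSpace ℝ (Fin d) =>
          (‖x‖ ^ 2 + ε ^ (2 / p)) ^ (p / 2) - ε) x‖ ≤ C * ε ^ (1 - 2 / p)) ∧
      (∀ x : EuclideanSpace ℝ (Fin d), ε ^ (1 / p) < ‖x‖ →
        ‖iteratedFDeriv ℝ 2 (fun x : EuclideanSpace ℝ (Fin d) =>
          (‖x‖ ^ 2 + ε ^ (2 / p)) ^ (p / 2) - ε) x‖ ≤ C * ‖x‖ ^ (p - 2)) ∧
      (∀ r : ℝ, 1 ≤ r → ∀ x ∈ Metric.closedBall (0 : EuclideanSpace ℝ (Fin d)) r,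
        |(‖x‖ ^ 2 + ε ^ (2 / p)) ^ (p / 2) - ε| +
        ‖fderiv ℝ (fun x : EuclideanSpace ℝ (Fin d) =>
          (‖x‖ ^ 2 + ε ^ (2 / p)) ^ (p / 2) - ε) x‖ +
        ‖iteratedFDeriv ℝ 2 (fun x : EuclideanSpace ℝ (Fin d) =>
          (‖x‖ ^ 2 + ε ^ (2 / p)) ^ (p / 2) - ε) x‖ ≤
          c₁ * ε ^ (1 - 2 / p) * r ^ p) := by
  have hC : 0 < |p| + |p * (p - 2)| :=
    add_pos_of_pos_of_nonneg (abs_pos.2 (by linarith)) (abs_nonneg _)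
  refine ⟨_, hC, 1 + p + (|p| + |p * (p - 2)|), by linarith, fun d ε hε hε1 => ?_⟩
  set a := ε ^ (2 / p) with ha_def
  have ha : 0 < a := by positivity
  have ha_pow : a ^ (p / 2) = ε := by
    rw [ha_def, ← Real.rpow_mul hε.le, div_mul_div_cancel₀ (by linarith), div_self two_ne_zero,
      Real.rpow_one]
  have ha_weight : a ^ (p / 2 - 1) = ε ^ (1 - 2 / p) := by
    rw [ha_def, ← Real.rpow_mul hε.le]
    congr 1
    field_simp
  have hhess :=
    SmoothedNormRpow.norm_iteratedFDeriv_two_le (E := EuclideanSpace ℝ (Fin d)) (p := p) ha ε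
  refine ⟨SmoothedNormRpow.contDiff ha ε, fun x _ => ?_, fun x hx => ?_, fun r hr x hx => ?_⟩
  · rw [← ha_weight]
    exact (hhess x).trans
      (mul_le_mul_of_nonneg_left (rpow_sq_add_le_rpow_of_le_two hp2.le ha _) hC.le)
  · have hx0 : 0 < ‖x‖ := (by positivity : 0 < ε ^ (1 / p)).trans hx
    exact (hhess x).trans
      (mul_le_mul_of_nonneg_left (rpow_sq_add_le_rpow_sub_two hp2.le ha.le hx0) hC.le)
  · have := SmoothedNormRpow.abs_add_norm_fderiv_add_norm_iteratedFDeriv_le hp1.le hp2.le ha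
      (Real.rpow_le_one hε.le hε1 (by positivity)) ε hr (mem_closedBall_zero_iff.1 hx)
    rwa [ha_pow, ha_weight] at this
end
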